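/- Let f : [0,1] → ℝ be continuous and define g(x) := f(1−x). Then for every q > 1, every integer n ≥ 1 and every x ∈ [0,1]: R_{n,q}(f,x) = R_{n,1/q}(g,1−x) and R_{∞,q}(f,x) = R_{∞,1/q}(g,1−x). -/

import Mathlib

open Finset Filter

noncomputable section

/-- The q-integer `[n]_q = 1 + q + ⋯ + q^(n-1)`. -/
def qInt (q : ℝ) (n : ℕ) : ℝ := ∑ i ∈ Finset.range n, q ^ i

/-- The q-factorial `[n]_q!`. -/
def qFact (q : ℝ) : ℕ → ℝ
  | 0 => 1
  | n + 1 => qFact q n * qInt q (n + 1)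

/-- The q-binomial coefficient `[n k]_q`. -/
def qBinom (q : ℝ) (n k : ℕ) : ℝ := qFact q n / (qFact q k * qFact q (n - k))

/-- The Lupaş basis function `b_{nk}(q;x)`. -/
def lupasB (q : ℝ) (n k : ℕ) (x : ℝ) : ℝ :=
  qBinom q n k * q ^ (k * (k - 1) / 2) * x ^ k * (1 - x) ^ (n - k) /
    ∏ j ∈ Finset.range (n - 1), (1 - x + q ^ (j + 1) * x)

/-- The limit Lupaş basis function `b_{∞k}(q;x)` (for `0 < q < 1`, `x ∈ [0,1)`). -/
def lupasBInf (q : ℝ) (k : ℕ) (x : ℝ) : ℝ :=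
  q ^ (k * (k - 1) / 2) * (x / (1 - x)) ^ k /
    ((1 - q) ^ k * qFact q k * ∏' j : ℕ, (1 + q ^ j * (x / (1 - x))))

/-- The Lupaş q-analogue of the Bernstein operator `R_{n,q}(f,x)`. -/
def lupasR (q : ℝ) (n : ℕ) (f : ℝ → ℝ) (x : ℝ) : ℝ :=
  ∑ k ∈ Finset.range (n + 1), f (qInt q k / qInt q n) * lupasB q n k x

/-- The limit q-Lupaş operator `R_{∞,q}(f,x)` for `0 < q < 1`. -/
def lupasRInfLow (q : ℝ) (f : ℝ → ℝ) (x : ℝ) : ℝ :=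
  if x = 1 then f 1 else ∑' k : ℕ, f (1 - q ^ k) * lupasBInf q k x

/-- The limit q-Lupaş operator `R_{∞,q}(f,x)`: for `q > 1` it is defined by
reflection, `R_{∞,q}(f,x) = R_{∞,1/q}(g,1-x)` with `g(x) = f(1-x)`. -/
def lupasRInf (q : ℝ) (f : ℝ → ℝ) (x : ℝ) : ℝ :=
  if 1 < q then lupasRInfLow (1 / q) (fun t => f (1 - t)) (1 - x)
  else lupasRInfLow q f x

/-- The transform `v(q,x) = qx/(1-x+qx)`. -/
def vq (q x : ℝ) : ℝ := q * x / (1 - x + q * x)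

/-- `L_{n,q}(f,x) = R_{n,q}(f,x) - R_{∞,q}(f,x)`. -/
def lupasL (q : ℝ) (n : ℕ) (f : ℝ → ℝ) (x : ℝ) : ℝ :=
  lupasR q n f x - lupasRInf q f x

/-- The modulus of continuity `ω(f,t)` of `f` on `[0,1]`. -/
def omega1 (f : ℝ → ℝ) (t : ℝ) : ℝ :=
  sSup {d | ∃ x ∈ Set.Icc (0:ℝ) 1, ∃ y ∈ Set.Icc (0:ℝ) 1, |x - y| ≤ t ∧ d = |f x - f y|}

/-- The second modulus of smoothness `ω₂(f,t)` of `f` on `[0,1]`. -/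
def omega2 (f : ℝ → ℝ) (t : ℝ) : ℝ :=
  sSup {d | ∃ h, 0 ≤ h ∧ h ≤ t ∧ ∃ x, 0 ≤ x ∧ x ≤ 1 - 2 * h ∧
    d = |f (x + 2 * h) - 2 * f (x + h) + f x|}

/-
Reindex the sum by `k ↦ n - k`. Replacing `q` by `1/q` rescales `[m]_q!` by `q^(-m(m-1)/2)` and
the denominator of `b_{nk}` by `q^(-n(n-1)/2)`; these powers cancel against `q^(k(k-1)/2)`, so
`b_{n,n-k}(1/q; 1-x) = b_{nk}(q; x)`. The nodes match because `[m]_{1/q} = q^(1-m) [m]_q` and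
`[n]_q = [k]_q + q^k [n-k]_q` give `1 - [n-k]_{1/q}/[n]_{1/q} = [k]_q/[n]_q`. For `R_{∞,q}` the
identity is the definition of the operator when `q > 1`.
-/

lemma qInt_add (q : ℝ) (m k : ℕ) : qInt q (m + k) = qInt q m + q ^ m * qInt q k := by
  simp only [qInt, Finset.sum_range_add, Finset.mul_sum, pow_add]

lemma qInt_inv_mul_pow {q : ℝ} (hq : q ≠ 0) (m : ℕ) : qInt q⁻¹ m * q ^ m = q * qInt q m := by
  induction m with
  | zero => simp [qInt]
  | succ m ih =>
    have hone (r : ℝ) : qInt r 1 = 1 := by simp [qInt]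
    rw [qInt_add, add_comm m 1, qInt_add, pow_add, hone, hone, inv_pow]
    linear_combination q * ih + q * inv_mul_cancel₀ (pow_ne_zero m hq)

lemma qFact_inv_mul_pow {q : ℝ} (hq : q ≠ 0) (m : ℕ) :
    qFact q⁻¹ m * q ^ (m * (m - 1) / 2) = qFact q m := by
  induction m with
  | zero => simp [qFact]
  | succ m ih =>
    have hexp : (m + 1) * (m + 1 - 1) / 2 = m * (m - 1) / 2 + m := by
      rw [← Nat.choose_two_right, ← Nat.choose_two_right, Nat.choose_succ_succ', Nat.choose_one_right,
        add_comm]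
    have hInt : qInt q⁻¹ (m + 1) * q ^ m = qInt q (m + 1) :=
      mul_left_cancel₀ hq (by rw [← qInt_inv_mul_pow hq, pow_succ]; ring)
    rw [qFact, qFact, hexp, pow_add, ← ih, ← hInt]
    ring

lemma qBinom_symm (q : ℝ) {n k : ℕ} (hk : k ≤ n) : qBinom q n (n - k) = qBinom q n k := by
  rw [qBinom, qBinom, Nat.sub_sub_self hk, mul_comm]

lemma qBinom_inv {q : ℝ} (hq : q ≠ 0) (n k : ℕ) :
    qBinom q⁻¹ n k = qBinom q n k * q ^ (k * (k - 1) / 2) * q ^ ((n - k) * (n - k - 1) / 2) /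
      q ^ (n * (n - 1) / 2) := by
  simp only [qBinom, ← qFact_inv_mul_pow hq]
  field_simp

lemma prod_range_inv_mul_pow {q : ℝ} (hq : q ≠ 0) (n : ℕ) (y : ℝ) :
    (∏ j ∈ range (n - 1), (1 - y + q⁻¹ ^ (j + 1) * y)) * q ^ (n * (n - 1) / 2) =
      ∏ j ∈ range (n - 1), (y + q ^ (j + 1) * (1 - y)) := by
  have hpow : q ^ (n * (n - 1) / 2) = ∏ j ∈ range (n - 1), q ^ (j + 1) := by
    rw [← Finset.sum_range_id, ← Finset.prod_pow_eq_pow_sum]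
    rcases n with _ | n
    · simp
    · rw [Finset.prod_range_succ', pow_zero, mul_one, Nat.add_sub_cancel]
  rw [hpow, ← Finset.prod_mul_distrib]
  refine Finset.prod_congr rfl fun j _ => ?_
  rw [inv_pow]
  field_simp
  ring

/- The two denominators differ by the factor `q ^ (n * (n - 1) / 2)`, so the identity holds for
every `x`, also where they vanish. -/
lemma lupasB_inv_reflect {q : ℝ} (hq : q ≠ 0) {n k : ℕ} (hk : k ≤ n) (x : ℝ) :
    lupasB q⁻¹ n (n - k) (1 - x) = lupasB q n k x := by
  have hN : q ^ (n * (n - 1) / 2) ≠ 0 := pow_ne_zero _ hq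
  rw [lupasB, ← mul_div_mul_right _ _ hN, prod_range_inv_mul_pow hq, sub_sub_cancel, lupasB]
  congr 1
  rw [qBinom_symm _ hk, qBinom_inv hq, Nat.sub_sub_self hk, inv_pow]
  field_simp

lemma one_sub_qInt_inv_div {q : ℝ} (hq : 0 < q) {n k : ℕ} (hn : 1 ≤ n) (hk : k ≤ n) :
    1 - qInt q⁻¹ (n - k) / qInt q⁻¹ n = qInt q k / qInt q n := by
  have hpos : 0 < qInt q n := Finset.sum_pos (fun i _ => pow_pos hq i) (by simp; omega)
  have hsplit := qInt_add q k (n - k)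
  rw [Nat.add_sub_cancel' hk] at hsplit
  have hinv (m : ℕ) : qInt q⁻¹ m = q * qInt q m / q ^ m := by
    rw [← qInt_inv_mul_pow hq.ne' m]; field_simp
  have hpow : q ^ n = q ^ k * q ^ (n - k) := by rw [← pow_add, Nat.add_sub_cancel' hk]
  rw [hinv, hinv, hpow]
  field_simp
  linear_combination hsplit

lemma lupasR_inv_reflect {q : ℝ} (hq : 0 < q) {n : ℕ} (hn : 1 ≤ n) (f : ℝ → ℝ) (x : ℝ) :
    lupasR q⁻¹ n (fun t => f (1 - t)) (1 - x) = lupasR q n f x := by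
  rw [lupasR, ← Finset.sum_range_reflect]
  refine Finset.sum_congr rfl fun k hk => ?_
  have hk : k ≤ n := Nat.lt_succ_iff.mp (Finset.mem_range.mp hk)
  rw [Nat.add_sub_cancel, one_sub_qInt_inv_div hq hn hk, lupasB_inv_reflect hq.ne' hk]

theorem lupasR_reflection_general (f : ℝ → ℝ)
    (q : ℝ) (hq : 1 < q) (n : ℕ) (hn : 1 ≤ n) (x : ℝ) :
    lupasR q n f x = lupasR (1 / q) n (fun t => f (1 - t)) (1 - x) ∧
    lupasRInf q f x = lupasRInf (1 / q) (fun t => f (1 - t)) (1 - x) := by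
  have hq_inv : ¬ 1 < 1 / q := not_lt.2 ((div_lt_one (by linarith)).2 hq).le
  refine ⟨?_, ?_⟩
  · rw [one_div, lupasR_inv_reflect (by linarith) hn]
  · rw [lupasRInf, lupasRInf, if_pos hq, if_neg hq_inv]

theorem lupasR_reflection (f : ℝ → ℝ) (hf : ContinuousOn f (Set.Icc 0 1))
    (q : ℝ) (hq : 1 < q) (n : ℕ) (hn : 1 ≤ n) (x : ℝ) (hx : x ∈ Set.Icc (0:ℝ) 1) :
    lupasR q n f x = lupasR (1 / q) n (fun t => f (1 - t)) (1 - x) ∧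
    lupasRInf q f x = lupasRInf (1 / q) (fun t => f (1 - t)) (1 - x) :=
  lupasR_reflection_general f q hq n hn x
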